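/- arXiv:1810.11110 — 3 statements merged into one kernel-verified Lean document; each statement's English description precedes it below -/
import Mathlib

section
/- Let δ ≥ 0, and let a₁ < b₁ and a₂ < b₂ be real numbers with centers cᵢ = (aᵢ+bᵢ)/2 satisfying c₂ > c₁. Then for every κ with 0 < κ ≤ c₂ - c₁, the double integral ∫_{a₁}^{b₁} ∫_{a₂}^{b₂} [ log(|x-y|² + δ²) − log(|x-y-κ|² + δ²) ] dx dy is strictly positive. Moreover this quantity is at least as large when δ = 0 as for any δ ≥ 0. -/
/-!
The inner integral is the logarithmic potential `P_δ(y) = ∫_{a₂}^{b₂} log((x - y)² + δ²) dx` of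
`[a₂, b₂]`. It is symmetric about `c₂`, and for `δ > 0` strictly decreasing on `(-∞, c₂]`.
Telescoping in `y`, the double integral equals `∫_{a₁}^{a₁+κ} (P_δ(y) - P_δ(y + b₁ - a₁)) dy`, and
`κ ≤ c₂ - c₁` puts `y + b₁ - a₁` closer to `c₂` than `y`, so the integrand is positive.
Likewise `P_η - P_δ` is symmetric and antitone on `(-∞, c₂]` for `η ≤ δ`, because its derivative
has the sign of `(A - B)(δ² - η²)` with `A = (a₂ - y)² ≤ B = (b₂ - y)²`. Hence the double integral
is antitone in `δ ≥ 0`, and positivity at `δ = 0` follows from positivity at `δ = 1`.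
-/

open Real Set MeasureTheory intervalIntegral

lemma antitoneOn_Iic_of_hasDerivAt_nonpos {f f' : ℝ → ℝ} {a c : ℝ} (hf : Continuous f)
    (hf' : ∀ y < c, y ≠ a → HasDerivAt f (f' y) y) (hf'₀ : ∀ y < c, y ≠ a → f' y ≤ 0) :
    AntitoneOn f (Iic c) := by
  have piece : ∀ s : Set ℝ, Convex ℝ s → a ∉ interior s → interior s ⊆ Iio c →
      AntitoneOn f s := fun s hs ha hc =>
    antitoneOn_of_hasDerivWithinAt_nonpos hs hf.continuousOn
      (fun y hy => (hf' y (hc hy) (ne_of_mem_of_not_mem hy ha)).hasDerivWithinAt)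
      (fun y hy => hf'₀ y (hc hy) (ne_of_mem_of_not_mem hy ha))
  rcases le_or_gt c a with hca | hac
  · exact piece _ (convex_Iic c) (by simpa using hca) (by simp)
  · rw [← Iic_union_Icc_eq_Iic hac.le]
    refine (piece _ (convex_Iic a) (by simp) (by simpa using hac.le)).union_right
      (piece _ (convex_Icc a c) (by simp) (by simpa using Ioo_subset_Iio_self))
      isGreatest_Iic (isLeast_Icc hac.le)

lemma AntitoneOn.le_of_symm {f : ℝ → ℝ} {s y₁ y₂ : ℝ} (hf : AntitoneOn f (Iic (s / 2)))
    (hsym : ∀ y, f (s - y) = f y) (h : y₁ ≤ y₂) (hs : y₁ + y₂ ≤ s) : f y₂ ≤ f y₁ := by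
  rcases le_total y₂ (s / 2) with hy₂ | hy₂
  · exact hf (mem_Iic.2 (by linarith)) hy₂ h
  · rw [← hsym y₂]
    exact hf (mem_Iic.2 (by linarith)) (mem_Iic.2 (by linarith)) (by linarith)

lemma StrictAntiOn.lt_of_symm {f : ℝ → ℝ} {s y₁ y₂ : ℝ} (hf : StrictAntiOn f (Iic (s / 2)))
    (hsym : ∀ y, f (s - y) = f y) (h : y₁ < y₂) (hs : y₁ + y₂ < s) : f y₂ < f y₁ := by
  rcases le_total y₂ (s / 2) with hy₂ | hy₂
  · exact hf (mem_Iic.2 (by linarith)) hy₂ h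
  · rw [← hsym y₂]
    exact hf (mem_Iic.2 (by linarith)) (mem_Iic.2 (by linarith)) (by linarith)

lemma integral_sub_comp_add_eq {g : ℝ → ℝ} (hg : Continuous g) (a b κ : ℝ) :
    ∫ y in a..b, (g y - g (y + κ)) = ∫ y in a..a + κ, (g y - g (y + (b - a))) := by
  have hi : ∀ u v, IntervalIntegrable g volume u v := hg.intervalIntegrable
  have hshift : ∀ d, Continuous fun y => g (y + d) := fun d => hg.comp (continuous_add_const d)
  rw [integral_sub (hi _ _) ((hshift κ).intervalIntegrable _ _),
    integral_sub (hi _ _) ((hshift _).intervalIntegrable _ _), integral_comp_add_right,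
    integral_comp_add_right, add_sub_cancel, add_right_comm, add_sub_cancel]
  linarith [integral_add_adjacent_intervals (hi a b) (hi b (b + κ)),
    integral_add_adjacent_intervals (hi a (a + κ)) (hi (a + κ) (b + κ))]

noncomputable def logSqAntideriv (δ t : ℝ) : ℝ :=
  t * log (t ^ 2 + δ ^ 2) - 2 * t + 2 * δ * arctan (t / δ)

lemma logSqAntideriv_neg (δ t : ℝ) : logSqAntideriv δ (-t) = -logSqAntideriv δ t := by
  simp only [logSqAntideriv, neg_sq, neg_div, arctan_neg]
  ring

lemma hasDerivAt_logSqAntideriv {δ t : ℝ} (h : t ≠ 0 ∨ δ ≠ 0) :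
    HasDerivAt (logSqAntideriv δ) (log (t ^ 2 + δ ^ 2)) t := by
  have hpos : 0 < t ^ 2 + δ ^ 2 := by rcases h with h | h <;> positivity
  have hlog := (hasDerivAt_id' t).mul (((hasDerivAt_pow 2 t).add_const (δ ^ 2)).log hpos.ne')
  have harctan : HasDerivAt (fun t => 2 * δ * arctan (t / δ)) (2 * δ ^ 2 / (t ^ 2 + δ ^ 2)) t := by
    rcases eq_or_ne δ 0 with rfl | hδ
    · simpa using hasDerivAt_const t (0 : ℝ)
    · refine (((hasDerivAt_id' t).div_const δ).arctan.const_mul (2 * δ)).congr_deriv ?_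
      field_simp
      ring
  refine ((hlog.sub ((hasDerivAt_id' t).const_mul 2)).add harctan).congr_deriv ?_
  field_simp
  ring

@[fun_prop]
lemma continuous_logSqAntideriv (δ : ℝ) : Continuous (logSqAntideriv δ) := by
  rcases eq_or_ne δ 0 with rfl | hδ
  · have : logSqAntideriv 0 = fun t => 2 * (t * log t) - 2 * t := by
      ext t
      simp only [logSqAntideriv, ne_eq, OfNat.ofNat_ne_zero, not_false_eq_true, zero_pow, add_zero,
        mul_zero, zero_mul, log_pow, Nat.cast_ofNat]
      ring
    rw [this]
    exact (continuous_const.mul continuous_mul_log).sub (by fun_prop)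
  · exact continuous_iff_continuousAt.2 fun t =>
      (hasDerivAt_logSqAntideriv (Or.inr hδ)).continuousAt

lemma intervalIntegrable_log_sub_sq_add_sq (c δ a b : ℝ) :
    IntervalIntegrable (fun x => log ((x - c) ^ 2 + δ ^ 2)) volume a b := by
  have : MeromorphicOn (fun x : ℝ => (x - c) ^ 2 + δ ^ 2) (uIcc a b) :=
    AnalyticOnNhd.meromorphicOn fun x _ => by fun_prop
  simpa [Real.norm_eq_abs, log_abs] using this.intervalIntegrable_log_norm

theorem integral_log_sq_add_sq (δ a b : ℝ) :
    ∫ t in a..b, log (t ^ 2 + δ ^ 2) = logSqAntideriv δ b - logSqAntideriv δ a :=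
  integral_eq_of_hasDerivAt_off_countable _ _ (countable_singleton 0)
    (continuous_logSqAntideriv δ).continuousOn
    (fun _ ht => hasDerivAt_logSqAntideriv (Or.inl ht.2))
    (by simpa using intervalIntegrable_log_sub_sq_add_sq 0 δ a b)

noncomputable def logPotential (δ a b y : ℝ) : ℝ :=
  ∫ x in a..b, log ((x - y) ^ 2 + δ ^ 2)

lemma logPotential_eq (δ a b y : ℝ) :
    logPotential δ a b y = logSqAntideriv δ (b - y) - logSqAntideriv δ (a - y) := by
  rw [logPotential, integral_comp_sub_right (fun t => log (t ^ 2 + δ ^ 2)), integral_log_sq_add_sq]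

@[fun_prop]
lemma continuous_logPotential (δ a b : ℝ) : Continuous (logPotential δ a b) := by
  simp only [funext (logPotential_eq δ a b)]
  fun_prop

lemma logPotential_add_sub (δ a b y : ℝ) :
    logPotential δ a b (a + b - y) = logPotential δ a b y := by
  rw [logPotential_eq, logPotential_eq, show b - (a + b - y) = -(a - y) by ring,
    show a - (a + b - y) = -(b - y) by ring, logSqAntideriv_neg, logSqAntideriv_neg]
  ring

lemma hasDerivAt_logPotential {δ a b y : ℝ} (ha : a - y ≠ 0 ∨ δ ≠ 0) (hb : b - y ≠ 0 ∨ δ ≠ 0) :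
    HasDerivAt (logPotential δ a b) (log ((a - y) ^ 2 + δ ^ 2) - log ((b - y) ^ 2 + δ ^ 2)) y := by
  rw [funext (logPotential_eq δ a b)]
  refine (((hasDerivAt_logSqAntideriv hb).comp y ((hasDerivAt_id' y).const_sub b)).sub
    ((hasDerivAt_logSqAntideriv ha).comp y ((hasDerivAt_id' y).const_sub a))).congr_deriv ?_
  ring

lemma strictAntiOn_logPotential {δ a b : ℝ} (hδ : 0 < δ) (hab : a < b) :
    StrictAntiOn (logPotential δ a b) (Iic ((a + b) / 2)) := by
  refine strictAntiOn_of_hasDerivWithinAt_neg (convex_Iic _)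
    (continuous_logPotential δ a b).continuousOn
    (fun y _ => (hasDerivAt_logPotential (Or.inr hδ.ne') (Or.inr hδ.ne')).hasDerivWithinAt)
    fun y hy => ?_
  rw [interior_Iic, mem_Iio] at hy
  have hlt : (a - y) ^ 2 + δ ^ 2 < (b - y) ^ 2 + δ ^ 2 := by nlinarith
  exact sub_neg.2 (log_lt_log (by positivity) hlt)

lemma antitoneOn_logPotential_sub {η δ a b : ℝ} (hηδ : η ^ 2 ≤ δ ^ 2) (hab : a ≤ b) :
    AntitoneOn (fun y => logPotential η a b y - logPotential δ a b y) (Iic ((a + b) / 2)) := by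
  refine antitoneOn_Iic_of_hasDerivAt_nonpos (a := a)
    (f' := fun y => (log ((a - y) ^ 2 + η ^ 2) - log ((b - y) ^ 2 + η ^ 2)) -
      (log ((a - y) ^ 2 + δ ^ 2) - log ((b - y) ^ 2 + δ ^ 2))) (by fun_prop)
    (fun y hy hya => ?_) fun y hy hya => ?_
  · have hb : b - y ≠ 0 := by linarith
    exact (hasDerivAt_logPotential (Or.inl (sub_ne_zero.2 hya.symm)) (Or.inl hb)).sub
      (hasDerivAt_logPotential (Or.inl (sub_ne_zero.2 hya.symm)) (Or.inl hb))
  · have hA : 0 < (a - y) ^ 2 := by positivity [sub_ne_zero.2 hya.symm]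
    have hAB : (a - y) ^ 2 ≤ (b - y) ^ 2 := by nlinarith
    have hAη : 0 < (a - y) ^ 2 + η ^ 2 := by linarith [sq_nonneg η]
    have hAδ : 0 < (a - y) ^ 2 + δ ^ 2 := by linarith [sq_nonneg δ]
    have hBη : 0 < (b - y) ^ 2 + η ^ 2 := by linarith [sq_nonneg η]
    have hBδ : 0 < (b - y) ^ 2 + δ ^ 2 := by linarith [sq_nonneg δ]
    have key : ((a - y) ^ 2 + η ^ 2) * ((b - y) ^ 2 + δ ^ 2) ≤
        ((b - y) ^ 2 + η ^ 2) * ((a - y) ^ 2 + δ ^ 2) := by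
      nlinarith [mul_nonneg (sub_nonneg.2 hAB) (sub_nonneg.2 hηδ)]
    have := log_le_log (mul_pos hAη hBδ) key
    rw [log_mul hAη.ne' hBδ.ne', log_mul hBη.ne' hAδ.ne'] at this
    linarith

noncomputable def logShiftEnergy (a₁ b₁ a₂ b₂ κ δ : ℝ) : ℝ :=
  ∫ y in a₁..b₁, ∫ x in a₂..b₂, (log ((x - y) ^ 2 + δ ^ 2) - log ((x - y - κ) ^ 2 + δ ^ 2))

lemma logShiftEnergy_eq (a₁ b₁ a₂ b₂ κ δ : ℝ) :
    logShiftEnergy a₁ b₁ a₂ b₂ κ δ =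
      ∫ y in a₁..a₁ + κ, (logPotential δ a₂ b₂ y - logPotential δ a₂ b₂ (y + (b₁ - a₁))) := by
  have inner : ∀ y, ∫ x in a₂..b₂, (log ((x - y) ^ 2 + δ ^ 2) - log ((x - y - κ) ^ 2 + δ ^ 2)) =
      logPotential δ a₂ b₂ y - logPotential δ a₂ b₂ (y + κ) := fun y => by
    simp only [sub_sub _ y κ]
    exact integral_sub (intervalIntegrable_log_sub_sq_add_sq _ _ _ _)
      (intervalIntegrable_log_sub_sq_add_sq _ _ _ _)
  simp only [logShiftEnergy, inner]
  exact integral_sub_comp_add_eq (continuous_logPotential δ a₂ b₂) a₁ b₁ κ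

lemma logShiftEnergy_pos {a₁ b₁ a₂ b₂ κ δ : ℝ} (hδ : 0 < δ) (h₁ : a₁ < b₁) (h₂ : a₂ < b₂)
    (hκ₀ : 0 < κ) (hκ : κ ≤ (a₂ + b₂) / 2 - (a₁ + b₁) / 2) :
    0 < logShiftEnergy a₁ b₁ a₂ b₂ κ δ := by
  rw [logShiftEnergy_eq]
  refine intervalIntegral_pos_of_pos_on ((by fun_prop : Continuous fun y =>
      logPotential δ a₂ b₂ y - logPotential δ a₂ b₂ (y + (b₁ - a₁))).intervalIntegrable _ _)
    (fun y hy => sub_pos.2 ?_) (by linarith)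
  exact (strictAntiOn_logPotential hδ h₂).lt_of_symm (logPotential_add_sub δ a₂ b₂)
    (by linarith) (by linarith [hy.2])

lemma logShiftEnergy_antitoneOn {a₁ b₁ a₂ b₂ κ : ℝ} (h₁ : a₁ ≤ b₁) (h₂ : a₂ ≤ b₂)
    (hκ₀ : 0 ≤ κ) (hκ : κ ≤ (a₂ + b₂) / 2 - (a₁ + b₁) / 2) :
    AntitoneOn (logShiftEnergy a₁ b₁ a₂ b₂ κ) (Ici 0) := by
  intro η hη δ _ hηδ
  simp only [logShiftEnergy_eq]
  refine integral_mono_on (by linarith) ((by fun_prop : Continuous fun y =>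
      logPotential δ a₂ b₂ y - logPotential δ a₂ b₂ (y + (b₁ - a₁))).intervalIntegrable _ _)
    ((by fun_prop : Continuous fun y =>
      logPotential η a₂ b₂ y - logPotential η a₂ b₂ (y + (b₁ - a₁))).intervalIntegrable _ _)
    fun y hy => ?_
  have := (antitoneOn_logPotential_sub (pow_le_pow_left₀ hη hηδ 2) h₂).le_of_symm
    (fun y => by simp only [logPotential_add_sub]) (by linarith : y ≤ y + (b₁ - a₁))
    (by linarith [hy.2])
  linarith

theorem double_integral_log_shift_pos_general (δ a₁ b₁ a₂ b₂ κ : ℝ) (hδ : 0 ≤ δ)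
    (h₁ : a₁ < b₁) (h₂ : a₂ < b₂)
    (hκ₀ : 0 < κ) (hκ : κ ≤ (a₂ + b₂) / 2 - (a₁ + b₁) / 2) :
    (0 < ∫ y in a₁..b₁, ∫ x in a₂..b₂,
        (Real.log (|x - y| ^ 2 + δ ^ 2) - Real.log (|x - y - κ| ^ 2 + δ ^ 2))) ∧
      (∫ y in a₁..b₁, ∫ x in a₂..b₂,
          (Real.log (|x - y| ^ 2 + δ ^ 2) - Real.log (|x - y - κ| ^ 2 + δ ^ 2))) ≤
        ∫ y in a₁..b₁, ∫ x in a₂..b₂,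
          (Real.log (|x - y| ^ 2 + (0 : ℝ) ^ 2) - Real.log (|x - y - κ| ^ 2 + (0 : ℝ) ^ 2)) := by
  simp only [sq_abs]
  have hanti := logShiftEnergy_antitoneOn h₁.le h₂.le hκ₀.le hκ
  refine ⟨?_, hanti self_mem_Ici hδ hδ⟩
  rcases hδ.eq_or_lt with rfl | hδ
  · exact (logShiftEnergy_pos one_pos h₁ h₂ hκ₀ hκ).trans_le
      (hanti self_mem_Ici (mem_Ici.2 zero_le_one) zero_le_one)
  · exact logShiftEnergy_pos hδ h₁ h₂ hκ₀ hκ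

/-- Let `δ ≥ 0`, `a₁ < b₁`, `a₂ < b₂` with centers `cᵢ = (aᵢ+bᵢ)/2` satisfying `c₂ > c₁`.
For every `0 < κ ≤ c₂ - c₁`, the double integral
`∫_{a₁}^{b₁} ∫_{a₂}^{b₂} (log(|x-y|² + δ²) − log(|x-y-κ|² + δ²)) dx dy`
is strictly positive, and it is at least as large at `δ = 0` as at any `δ ≥ 0`. -/
theorem double_integral_log_shift_pos (δ a₁ b₁ a₂ b₂ κ : ℝ) (hδ : 0 ≤ δ)
    (h₁ : a₁ < b₁) (h₂ : a₂ < b₂) (hc : (a₁ + b₁) / 2 < (a₂ + b₂) / 2)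
    (hκ₀ : 0 < κ) (hκ : κ ≤ (a₂ + b₂) / 2 - (a₁ + b₁) / 2) :
    (0 < ∫ y in a₁..b₁, ∫ x in a₂..b₂,
        (Real.log (|x - y| ^ 2 + δ ^ 2) - Real.log (|x - y - κ| ^ 2 + δ ^ 2))) ∧
      (∫ y in a₁..b₁, ∫ x in a₂..b₂,
          (Real.log (|x - y| ^ 2 + δ ^ 2) - Real.log (|x - y - κ| ^ 2 + δ ^ 2))) ≤
        ∫ y in a₁..b₁, ∫ x in a₂..b₂,
          (Real.log (|x - y| ^ 2 + (0 : ℝ) ^ 2) - Real.log (|x - y - κ| ^ 2 + (0 : ℝ) ^ 2)) :=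
  double_integral_log_shift_pos_general δ a₁ b₁ a₂ b₂ κ hδ h₁ h₂ hκ₀ hκ
end

section
/- Let k be a number field of degree N over ℚ with r₁ real and r₂ complex embeddings, V = ℝ^{r₁} × ℂ^{r₂} with the field norm ‖v‖ = ∏_{i=1}^{r₁}|v_i| · ∏_{i=r₁+1}^{r₁+r₂}|v_i|², and embed the ring of integers O_k ⊂ V via the Archimedean embeddings. Then any cylinder C = ∏_{i=1}^{r₁} B_ℝ(t_i, R_i) × ∏_{i=r₁+1}^{d} B_ℂ(t_i, R_i) whose Lebesgue volume is strictly less than π^{r₂}/4^{r₂} contains at most one point of O_k. -/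
/-!
If two distinct algebraic integers `x, y` lie in the cylinder of radii `R_w`, then every
coordinate of `x - y` has absolute value at most `2 R_w`, so
`1 ≤ |N(x - y)| ≤ ∏_w (2 R_w) ^ mult w`. The volume of the cylinder is exactly `(π / 4) ^ r₂`
times this product, since a disc of radius `R` has area `(π / 4) (2 R)²`.
-/

open NumberField NumberField.InfinitePlace NumberField.mixedEmbedding MeasureTheory
open scoped Classical

namespace NumberField.mixedEmbedding

open Metric

variable {K : Type*} [Field K]

def closedCylinder (t : mixedSpace K) (R : InfinitePlace K → ℝ) : Set (mixedSpace K) :=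
  (Set.univ.pi fun w : {w // IsReal w} ↦ closedBall (t.1 w) (R w)) ×ˢ
    (Set.univ.pi fun w : {w // IsComplex w} ↦ closedBall (t.2 w) (R w))

theorem closedCylinder_eq_setOf (t : mixedSpace K) (R : InfinitePlace K → ℝ) :
    closedCylinder t R = {v : mixedSpace K | (∀ w : {w // IsReal w}, |v.1 w - t.1 w| ≤ R w) ∧
      (∀ w : {w // IsComplex w}, ‖v.2 w - t.2 w‖ ≤ R w)} := by
  ext v
  simp [closedCylinder, dist_eq_norm]

theorem normAtPlace_sub_le_of_mem_closedCylinder {t u v : mixedSpace K}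
    {R : InfinitePlace K → ℝ} (hu : u ∈ closedCylinder t R) (hv : v ∈ closedCylinder t R)
    (w : InfinitePlace K) : normAtPlace w (u - v) ≤ 2 * R w := by
  obtain ⟨hu₁, hu₂⟩ := hu
  obtain ⟨hv₁, hv₂⟩ := hv
  rw [two_mul]
  by_cases hw : IsReal w
  · rw [normAtPlace_apply_of_isReal hw, Prod.fst_sub, Pi.sub_apply, ← dist_eq_norm]
    exact (dist_triangle_right _ _ _).trans (add_le_add (hu₁ ⟨w, hw⟩ trivial) (hv₁ ⟨w, hw⟩ trivial))
  · have hw := not_isReal_iff_isComplex.mp hw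
    rw [normAtPlace_apply_of_isComplex hw, Prod.snd_sub, Pi.sub_apply, ← dist_eq_norm]
    exact (dist_triangle_right _ _ _).trans (add_le_add (hu₂ ⟨w, hw⟩ trivial) (hv₂ ⟨w, hw⟩ trivial))

variable [NumberField K]

theorem norm_sub_le_of_mem_closedCylinder {t u v : mixedSpace K}
    {R : InfinitePlace K → ℝ} (hu : u ∈ closedCylinder t R) (hv : v ∈ closedCylinder t R) :
    mixedEmbedding.norm (u - v) ≤ ∏ w, (2 * R w) ^ mult w :=
  Finset.prod_le_prod (fun _ _ ↦ pow_nonneg (normAtPlace_nonneg _ _) _)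
    fun w _ ↦ pow_le_pow_left₀ (normAtPlace_nonneg _ _)
      (normAtPlace_sub_le_of_mem_closedCylinder hu hv w) _

theorem volume_closedCylinder (t : mixedSpace K) {R : InfinitePlace K → ℝ} (hR : ∀ w, 0 ≤ R w) :
    volume (closedCylinder t R) =
      ENNReal.ofReal ((Real.pi / 4) ^ nrComplexPlaces K * ∏ w, (2 * R w) ^ mult w) := by
  have hball : ∏ w : {w // IsComplex w}, Real.pi * R w.1 ^ 2 =
      (Real.pi / 4) ^ nrComplexPlaces K * ∏ w : {w // IsComplex w}, (2 * R w.1) ^ 2 := by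
    rw [nrComplexPlaces, ← Finset.card_univ, ← Finset.prod_const, ← Finset.prod_mul_distrib]
    exact Finset.prod_congr rfl fun _ _ ↦ by ring
  calc volume (closedCylinder t R)
      = (∏ w : {w // IsReal w}, ENNReal.ofReal (2 * R w.1)) *
          ∏ w : {w // IsComplex w}, ENNReal.ofReal (Real.pi * R w.1 ^ 2) := by
        simp only [closedCylinder, Measure.volume_eq_prod, Measure.prod_prod, volume_pi_pi,
          Real.volume_closedBall, Complex.volume_closedBall]
        refine congrArg _ (Finset.prod_congr rfl fun w _ ↦ ?_)
        rw [ENNReal.ofReal_mul Real.pi_pos.le, ENNReal.ofReal_pow (hR w.1), mul_comm,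
          ← NNReal.coe_real_pi, ENNReal.ofReal_coe_nnreal]
    _ = ENNReal.ofReal ((∏ w : {w // IsReal w}, 2 * R w.1) *
          ∏ w : {w // IsComplex w}, Real.pi * R w.1 ^ 2) := by
        rw [ENNReal.ofReal_mul (Finset.prod_nonneg fun w _ ↦ by linarith [hR w.1]),
          ENNReal.ofReal_prod_of_nonneg (fun w _ ↦ by linarith [hR w.1]),
          ENNReal.ofReal_prod_of_nonneg (fun w _ ↦ by positivity)]
    _ = _ := by
        rw [hball, prod_eq_prod_mul_prod]
        simp only [mult_isReal, mult_isComplex, pow_one]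
        rw [mul_left_comm]

theorem one_le_norm_mixedEmbedding {x : 𝓞 K} (hx : x ≠ 0) :
    1 ≤ mixedEmbedding.norm (mixedEmbedding K (x : K)) := by
  rw [norm_eq_norm, ← Algebra.coe_norm_int, ← Int.cast_one, ← Int.cast_abs, Rat.cast_intCast,
    Int.cast_le]
  exact Int.one_le_abs (Algebra.norm_ne_zero_iff.mpr hx)

theorem subsingleton_of_volume_closedCylinder_lt {t : mixedSpace K} {R : InfinitePlace K → ℝ}
    (hvol : volume (closedCylinder t R) < ENNReal.ofReal ((Real.pi / 4) ^ nrComplexPlaces K)) :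
    {x : 𝓞 K | mixedEmbedding K (x : K) ∈ closedCylinder t R}.Subsingleton := by
  intro x hx y hy
  by_contra hxy
  have hR (w : InfinitePlace K) : 0 ≤ R w := by
    simpa using normAtPlace_sub_le_of_mem_closedCylinder hx hx w
  have hprod : 1 ≤ ∏ w, (2 * R w) ^ mult w := calc
    1 ≤ mixedEmbedding.norm (mixedEmbedding K ((x - y : 𝓞 K) : K)) :=
      one_le_norm_mixedEmbedding (sub_ne_zero.mpr hxy)
    _ ≤ _ := by simpa using norm_sub_le_of_mem_closedCylinder hx hy
  refine hvol.not_ge ?_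
  rw [volume_closedCylinder t hR]
  exact ENNReal.ofReal_le_ofReal (le_mul_of_one_le_right (by positivity) hprod)

end NumberField.mixedEmbedding

/-- Any cylinder (coordinate-wise product of closed real intervals and closed complex discs)
in the mixed space `ℝ^{r₁} × ℂ^{r₂}` of a number field `K` whose Lebesgue volume is strictly
less than `π^{r₂} / 4^{r₂}` contains at most one point of the ring of integers `𝓞 K`
(embedded via the Archimedean embeddings). -/
theorem cylinder_small_volume_subsingleton (K : Type*) [Field K] [NumberField K]
    (t : mixedSpace K) (R : InfinitePlace K → ℝ)
    (C : Set (mixedSpace K))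
    (hC : C = {v : mixedSpace K |
      (∀ w : {w : InfinitePlace K // IsReal w}, |v.1 w - t.1 w| ≤ R w) ∧
      (∀ w : {w : InfinitePlace K // IsComplex w}, ‖v.2 w - t.2 w‖ ≤ R w)})
    (hvol : volume C < ENNReal.ofReal
      (Real.pi ^ (nrComplexPlaces K) / 4 ^ (nrComplexPlaces K))) :
    ∀ x y : 𝓞 K, mixedEmbedding K (x : K) ∈ C → mixedEmbedding K (y : K) ∈ C → x = y := by
  subst hC
  rw [← closedCylinder_eq_setOf] at hvol ⊢
  rw [← div_pow] at hvol
  exact fun x y hx hy ↦ subsingleton_of_volume_closedCylinder_lt hvol hx hy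
end

section
/- Let F ⊂ V^× = {v ∈ V : ‖v‖ ≠ 0} be a finite union of convex closed cones such that F/ℝ^× is compact in the projective space P(V). Then there exists a constant C₀ > 0 such that every v ∈ F satisfies C₀^{-1}‖v‖^{1/N} ≤ |v|_i ≤ C₀‖v‖^{1/N} for every coordinate i = 1,…,d. -/
/-!
Each `normAtPlace w` and `v ↦ (mixedEmbedding.norm v) ^ (1 / N)` is positively homogeneous of
degree one, continuous, and positive on the compact section `S ∩ sphere 0 1`; rescaling to that
section, each dominates the sup norm `‖v‖` on `S` up to a constant. Conversely both are at most
`‖v‖`, the maximum of the `normAtPlace w v`, since the mixed norm is a product of `N` of them.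
-/

open NumberField NumberField.InfinitePlace NumberField.mixedEmbedding
open scoped Classical

section Cone

variable {E : Type*} [NormedAddCommGroup E] [NormedSpace ℝ E]

theorem exists_norm_le_mul_of_isCompact_inter_sphere {S : Set E}
    (hS : ∀ v ∈ S, ∀ c : ℝ, 0 < c → c • v ∈ S) (hT : IsCompact (S ∩ Metric.sphere 0 1))
    {g : E → ℝ} (hg : ContinuousOn g (S ∩ Metric.sphere 0 1))
    (hpos : ∀ u ∈ S ∩ Metric.sphere 0 1, 0 < g u)
    (hhom : ∀ v ∈ S, ∀ c : ℝ, 0 < c → g (c • v) = c * g v) :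
    ∃ C, 0 < C ∧ ∀ v ∈ S, ‖v‖ ≤ C * g v := by
  obtain ⟨m, hm, hmg⟩ := hT.exists_forall_le' hg hpos
  refine ⟨m⁻¹, inv_pos.2 hm, fun v hv ↦ ?_⟩
  rcases eq_or_ne v 0 with rfl | hv0
  · have h0 : g 0 = 2 * g 0 := by simpa using hhom 0 hv 2 two_pos
    simp [show g 0 = 0 by linarith]
  have ht : 0 < ‖v‖ := norm_pos_iff.2 hv0
  set u := ‖v‖⁻¹ • v
  have huT : u ∈ S ∩ Metric.sphere 0 1 := by
    refine ⟨hS v hv _ (inv_pos.2 ht), ?_⟩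
    rw [mem_sphere_zero_iff_norm, _root_.norm_smul, norm_inv, norm_norm, inv_mul_cancel₀ ht.ne']
  have hgv : g v = ‖v‖ * g u := by
    rw [← hhom u huT.1 _ ht, smul_smul, mul_inv_cancel₀ ht.ne', one_smul]
  calc ‖v‖ = m⁻¹ * (‖v‖ * m) := by field_simp
    _ ≤ m⁻¹ * (‖v‖ * g u) := by gcongr; exact hmg u huT
    _ = m⁻¹ * g v := by rw [hgv]

end Cone

namespace NumberField.mixedEmbedding

variable {K : Type*} [Field K] [NumberField K]

theorem normAtPlace_le_norm (w : InfinitePlace K) (x : mixedSpace K) :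
    normAtPlace w x ≤ ‖x‖ := by
  rw [norm_eq_sup'_normAtPlace]
  exact Finset.le_sup' (fun w ↦ normAtPlace w x) (Finset.mem_univ w)

theorem norm_le_norm_pow_finrank (x : mixedSpace K) :
    mixedEmbedding.norm x ≤ ‖x‖ ^ Module.finrank ℚ K := by
  rw [mixedEmbedding.norm_apply, ← sum_mult_eq, ← Finset.prod_pow_eq_pow_sum]
  exact Finset.prod_le_prod (fun w _ ↦ pow_nonneg (normAtPlace_nonneg w x) _)
    fun w _ ↦ pow_le_pow_left₀ (normAtPlace_nonneg w x) (normAtPlace_le_norm w x) _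

theorem norm_rpow_one_div_finrank_le_norm (x : mixedSpace K) :
    mixedEmbedding.norm x ^ ((1 : ℝ) / Module.finrank ℚ K) ≤ ‖x‖ := by
  have hN : (Module.finrank ℚ K : ℝ) ≠ 0 := Nat.cast_ne_zero.2 Module.finrank_pos.ne'
  calc _ ≤ (‖x‖ ^ Module.finrank ℚ K) ^ ((1 : ℝ) / Module.finrank ℚ K) := by
        gcongr
        · exact mixedEmbedding.norm_nonneg x
        · exact norm_le_norm_pow_finrank x
    _ = ‖x‖ := by
        rw [← Real.rpow_natCast, ← Real.rpow_mul (norm_nonneg x), mul_one_div_cancel hN,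
          Real.rpow_one]

theorem norm_smul_rpow_one_div_finrank (c : ℝ) (x : mixedSpace K) :
    mixedEmbedding.norm (c • x) ^ ((1 : ℝ) / Module.finrank ℚ K) =
      |c| * mixedEmbedding.norm x ^ ((1 : ℝ) / Module.finrank ℚ K) := by
  have hN : (Module.finrank ℚ K : ℝ) ≠ 0 := Nat.cast_ne_zero.2 Module.finrank_pos.ne'
  rw [mixedEmbedding.norm_smul, Real.mul_rpow (by positivity) (mixedEmbedding.norm_nonneg x),
    ← Real.rpow_natCast, ← Real.rpow_mul (abs_nonneg c), mul_one_div_cancel hN, Real.rpow_one]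

end NumberField.mixedEmbedding

theorem cone_coords_comparable_to_norm_general (K : Type*) [Field K] [NumberField K]
    (n : ℕ) (F : Fin n → Set (mixedSpace K)) (S : Set (mixedSpace K))
    (hS : S = ⋃ j, F j)
    (hcone : ∀ j, ∀ v ∈ F j, ∀ c : ℝ, 0 < c → c • v ∈ F j)
    (hsub : ∀ v ∈ S, mixedEmbedding.norm v ≠ 0)
    (hcpt : IsCompact (S ∩ Metric.sphere (0 : mixedSpace K) 1)) :
    ∃ C₀ : ℝ, 0 < C₀ ∧ ∀ v ∈ S, ∀ w : InfinitePlace K,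
      C₀⁻¹ * (mixedEmbedding.norm v) ^ ((1 : ℝ) / (Module.finrank ℚ K)) ≤ normAtPlace w v ∧
      normAtPlace w v ≤ C₀ * (mixedEmbedding.norm v) ^ ((1 : ℝ) / (Module.finrank ℚ K)) := by
  have hscale : ∀ v ∈ S, ∀ c : ℝ, 0 < c → c • v ∈ S := by
    subst hS
    simp only [Set.mem_iUnion]
    rintro v ⟨j, hv⟩ c hc
    exact ⟨j, hcone j v hv c hc⟩
  have hnorm_pos : ∀ v ∈ S, 0 < mixedEmbedding.norm v :=
    fun v hv ↦ (mixedEmbedding.norm_nonneg v).lt_of_ne' (hsub v hv)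
  obtain ⟨C, hC, hC_le⟩ := exists_norm_le_mul_of_isCompact_inter_sphere hscale hcpt
    ((mixedEmbedding.continuous_norm K).rpow_const
      fun _ ↦ Or.inr (one_div_nonneg.2 (Nat.cast_nonneg _))).continuousOn
    (fun u hu ↦ Real.rpow_pos_of_pos (hnorm_pos u hu.1) _)
    (fun v _ c hc ↦ by rw [norm_smul_rpow_one_div_finrank, abs_of_pos hc])
  choose D hD hD_le using fun w ↦ exists_norm_le_mul_of_isCompact_inter_sphere hscale hcpt
    (continuous_normAtPlace w).continuousOn
    (fun u hu ↦ (normAtPlace_nonneg w u).lt_of_ne'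
      (mixedEmbedding.norm_ne_zero_iff.1 (hsub u hu.1) w))
    (fun v _ c hc ↦ by rw [normAtPlace_smul, abs_of_pos hc])
  have hsum : 0 ≤ ∑ w, D w := Finset.sum_nonneg fun w _ ↦ (hD w).le
  refine ⟨C + ∑ w, D w, by positivity, fun v hv w ↦ ⟨?_, ?_⟩⟩
  · have hDw : D w ≤ C + ∑ w, D w := by
      have := Finset.single_le_sum (fun w _ ↦ (hD w).le) (Finset.mem_univ w)
      linarith
    calc _ ≤ (C + ∑ w, D w)⁻¹ * ‖v‖ := by gcongr; exact norm_rpow_one_div_finrank_le_norm v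
      _ ≤ (C + ∑ w, D w)⁻¹ * (D w * normAtPlace w v) := by gcongr; exact hD_le w v hv
      _ ≤ normAtPlace w v := by
        rw [← mul_assoc]
        refine mul_le_of_le_one_left (normAtPlace_nonneg w v) ?_
        rw [inv_mul_le_iff₀ (by positivity), mul_one]
        exact hDw
  · calc normAtPlace w v ≤ ‖v‖ := normAtPlace_le_norm w v
      _ ≤ C * _ := hC_le v hv
      _ ≤ _ := by
        gcongr
        · exact Real.rpow_nonneg (mixedEmbedding.norm_nonneg v) _
        · linarith

/-- Let `F` be a finite union of convex closed cones in `V^× = {v : ‖v‖ ≠ 0}` of the mixed space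
`V = ℝ^{r₁} × ℂ^{r₂}` of a number field `K` of degree `N`, whose image in the projective space
`P(V)` is compact (equivalently, `F ∩ S(0,1)` is a compact subset of `V^×`).  Then there is a
constant `C₀ > 0` such that every `v ∈ F` satisfies
`C₀⁻¹ ‖v‖^{1/N} ≤ |v|ᵢ ≤ C₀ ‖v‖^{1/N}` for every coordinate `i`, i.e. for every infinite
place `w`, `normAtPlace w v` is within a factor `C₀` of `(mixedEmbedding.norm v)^{1/N}`. -/
theorem cone_coords_comparable_to_norm (K : Type*) [Field K] [NumberField K]
    (n : ℕ) (F : Fin n → Set (mixedSpace K)) (S : Set (mixedSpace K))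
    (hS : S = ⋃ j, F j)
    (hconv : ∀ j, Convex ℝ (F j))
    (hcone : ∀ j, ∀ v ∈ F j, ∀ c : ℝ, 0 < c → c • v ∈ F j)
    (hsub : ∀ v ∈ S, mixedEmbedding.norm v ≠ 0)
    (hclosed : ∀ j, IsClosed
      {v : {v : mixedSpace K // mixedEmbedding.norm v ≠ 0} | (v : mixedSpace K) ∈ F j})
    (hcpt : IsCompact (S ∩ Metric.sphere (0 : mixedSpace K) 1)) :
    ∃ C₀ : ℝ, 0 < C₀ ∧ ∀ v ∈ S, ∀ w : InfinitePlace K,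
      C₀⁻¹ * (mixedEmbedding.norm v) ^ ((1 : ℝ) / (Module.finrank ℚ K)) ≤ normAtPlace w v ∧
      normAtPlace w v ≤ C₀ * (mixedEmbedding.norm v) ^ ((1 : ℝ) / (Module.finrank ℚ K)) :=
  cone_coords_comparable_to_norm_general K n F S hS hcone hsub hcpt
end
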